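/- arXiv:0712.1398 — 5 statements merged into one kernel-verified Lean document; each statement's English description precedes it below -/
import Mathlib

section
/- Let g ⊆ so(V) be a Lie subalgebra and let T ∈ Λ³V satisfy T_X ∈ g for all X ∈ V. Then: (i) R^T(X,Y) ∈ g for all X,Y ∈ V, and R^T satisfies the first Bianchi identity, i.e. R^T ∈ K(g,V); (ii) for all X,Y ∈ V the skew endomorphism −[T_X,T_Y] + T_{T_X Y} belongs to g, and the map (X,Y,Z,W) ↦ ⟨(−[T_X,T_Y] + T_{T_X Y})Z, W⟩ is an alternating 4-form Ω^T on V. -/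
open scoped RealInnerProductSpace BigOperators

noncomputable section

variable {V : Type} [NormedAddCommGroup V] [InnerProductSpace ℝ V] [FiniteDimensional ℝ V]

/-- A skew-symmetric endomorphism of a real inner product space. -/
def IsSkew (A : V →ₗ[ℝ] V) : Prop := ∀ x y : V, ⟪A x, y⟫ = - ⟪x, A y⟫

/-- `R^T X Y = [T_X, T_Y] + 2 • T_{T_X Y}` as an endomorphism of `V`. -/
def RT (TX : V → (V →ₗ[ℝ] V)) (X Y : V) : V →ₗ[ℝ] V :=
  TX X ∘ₗ TX Y - TX Y ∘ₗ TX X + (2 : ℝ) • TX (TX X Y)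

/-- The endomorphism-valued version of the 4-form `Ω^T`:
`Ω^T(X,Y) = -[T_X,T_Y] + T_{T_X Y}`. -/
def OmT (TX : V → (V →ₗ[ℝ] V)) (X Y : V) : V →ₗ[ℝ] V :=
  -(TX X ∘ₗ TX Y - TX Y ∘ₗ TX X) + TX (TX X Y)

theorem stmt_6
    (g : Submodule ℝ (V →ₗ[ℝ] V))
    (hgskew : ∀ A ∈ g, IsSkew A)
    (hglie : ∀ A ∈ g, ∀ B ∈ g, A ∘ₗ B - B ∘ₗ A ∈ g)
    (T : AlternatingMap ℝ V ℝ (Fin 3))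
    (TX : V → (V →ₗ[ℝ] V))
    (hTX : ∀ X Y Z : V, ⟪TX X Y, Z⟫ = T ![X, Y, Z])
    (hTg : ∀ X : V, TX X ∈ g) :
    -- (i) `R^T` is a `g`-valued algebraic curvature tensor
    (∀ X Y : V, RT TX X Y ∈ g) ∧
    (∀ X Y Z : V, RT TX X Y Z + RT TX Y Z X + RT TX Z X Y = 0) ∧
    -- (ii) `-[T_X,T_Y] + T_{T_X Y}` belongs to `g` and induces an alternating 4-form
    (∀ X Y : V, OmT TX X Y ∈ g) ∧
    (∀ (v : Fin 4 → V) (i j : Fin 4), i ≠ j → v i = v j →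
      ⟪OmT TX (v 0) (v 1) (v 2), v 3⟫ = 0) := by
  -- antisymmetry of T in adjacent slots
  have swap01 : ∀ A B C : V, T ![A,B,C] = - T ![B,A,C] := by
    intro A B C
    have h := T.map_swap ![B,A,C] (show (0:Fin 3) ≠ 1 by decide)
    have h2 : (![B,A,C] ∘ Equiv.swap (0:Fin 3) 1) = ![A,B,C] := by
      funext i; fin_cases i <;> simp [Equiv.swap_apply_def]
    rw [h2] at h; linarith
  have swap12 : ∀ A B C : V, T ![A,B,C] = - T ![A,C,B] := by
    intro A B C
    have h := T.map_swap ![A,C,B] (show (1:Fin 3) ≠ 2 by decide)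
    have h2 : (![A,C,B] ∘ Equiv.swap (1:Fin 3) 2) = ![A,B,C] := by
      funext i; fin_cases i <;> simp [Equiv.swap_apply_def]
    rw [h2] at h; linarith
  -- TX A B = - TX B A
  have hTXswap : ∀ A B : V, TX A B = - TX B A := by
    intro A B
    refine ext_inner_right ℝ fun v => ?_
    rw [inner_neg_left, hTX, hTX, swap01]
  have hTXzero : ∀ A : V, TX A A = 0 := by
    intro A
    refine ext_inner_right ℝ fun v => ?_
    rw [inner_zero_left, hTX]
    have := swap01 A A v; linarith
  -- key inner-product identities
  have key1 : ∀ A B C W : V, ⟪TX A (TX B C), W⟫ = -⟪TX A W, TX B C⟫ := by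
    intro A B C W
    rw [hTX, hTX, swap12]
  have key2 : ∀ A B C W : V, ⟪TX (TX A B) C, W⟫ = ⟪TX C W, TX A B⟫ := by
    intro A B C W
    rw [hTX, hTX, swap01 (TX A B) C W, swap12 C (TX A B) W]; ring
  -- scalar expansions
  have hRT : ∀ X Y Z W : V, ⟪RT TX X Y Z, W⟫ =
      -⟪TX X W, TX Y Z⟫ + ⟪TX Y W, TX X Z⟫ + 2 * ⟪TX Z W, TX X Y⟫ := by
    intro X Y Z W
    simp only [RT, LinearMap.add_apply, LinearMap.sub_apply, LinearMap.smul_apply,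
      LinearMap.comp_apply, inner_add_left, inner_sub_left, inner_smul_left,
      key1, key2]
    ring_nf
    simp [key1, key2]
    ring
  have hOm : ∀ X Y Z W : V, ⟪OmT TX X Y Z, W⟫ =
      ⟪TX X W, TX Y Z⟫ - ⟪TX Y W, TX X Z⟫ + ⟪TX Z W, TX X Y⟫ := by
    intro X Y Z W
    simp only [OmT, LinearMap.add_apply, LinearMap.neg_apply, LinearMap.sub_apply,
      LinearMap.comp_apply, inner_add_left, inner_neg_left, inner_sub_left, key1, key2]
    ring
  refine ⟨?_, ?_, ?_, ?_⟩
  · intro X Y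
    exact g.add_mem (hglie _ (hTg X) _ (hTg Y)) (g.smul_mem 2 (hTg _))
  · intro X Y Z
    refine ext_inner_right ℝ fun W => ?_
    rw [inner_zero_left, inner_add_left, inner_add_left, hRT, hRT, hRT,
      hTXswap Z X, hTXswap Y X, hTXswap Z Y]
    simp only [inner_neg_right]
    ring
  · intro X Y
    exact g.add_mem (g.neg_mem (hglie _ (hTg X) _ (hTg Y))) (hTg _)
  · intro v i j hij hv
    have key : ∀ X Y Z W : V,
        (X = Y ∨ X = Z ∨ X = W ∨ Y = Z ∨ Y = W ∨ Z = W) →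
        ⟪OmT TX X Y Z, W⟫ = 0 := by
      rintro X Y Z W (rfl | rfl | rfl | rfl | rfl | rfl)
      · rw [hOm, hTXzero]; simp
      · rw [hOm, hTXzero, hTXswap Y X]; simp
      · rw [hOm, hTXzero, hTXswap Y X, hTXswap Z X]
        simp [inner_neg_left, inner_neg_right, real_inner_comm]
      · rw [hOm, hTXzero]; simp
      · rw [hOm, hTXzero, hTXswap Z Y]
        simp [inner_neg_left, inner_neg_right, real_inner_comm]
      · rw [hOm, hTXzero]
        simp [real_inner_comm]
    apply key
    fin_cases i <;> fin_cases j <;>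
      first
        | exact absurd rfl hij
        | (simp only [Fin.zero_eta, Fin.mk_one, Fin.reduceFinMk, Fin.isValue] at hv ⊢; tauto)
        | simp_all
        | (rw [eq_comm] at hv; simp_all)
        | tauto
end
end

section
/- For T ∈ Λ³V on a Euclidean vector space V, the tensor R^T vanishes identically if and only if T = 0. -/
open scoped RealInnerProductSpace BigOperators

noncomputable section

variable {V : Type} [NormedAddCommGroup V] [InnerProductSpace ℝ V] [FiniteDimensional ℝ V]

/-- On a Euclidean vector space, `R^T` vanishes identically iff `T = 0`. -/
theorem stmt_7
    (T : AlternatingMap ℝ V ℝ (Fin 3))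
    (TX : V → (V →ₗ[ℝ] V))
    (hTX : ∀ X Y Z : V, ⟪TX X Y, Z⟫ = T ![X, Y, Z]) :
    (∀ X Y : V, RT TX X Y = 0) ↔ T = 0 := by
  have hsw01 : ∀ a b c : V, T ![b, a, c] = -T ![a, b, c] := by
    intro a b c
    have hv : ![b, a, c] = ![a, b, c] ∘ Equiv.swap (0 : Fin 3) 1 := by
      funext i; fin_cases i <;> simp [Equiv.swap_apply_def]
    rw [hv]
    exact T.map_swap _ (by decide)
  have hsw12 : ∀ a b c : V, T ![a, c, b] = -T ![a, b, c] := by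
    intro a b c
    have hv : ![a, c, b] = ![a, b, c] ∘ Equiv.swap (1 : Fin 3) 2 := by
      funext i; fin_cases i <;> simp [Equiv.swap_apply_def]
    rw [hv]
    exact T.map_swap _ (by decide)
  constructor
  · intro h
    have key : ∀ X Y : V, TX X Y = 0 := by
      intro X Y
      have hXX : TX X X = 0 := by
        rw [← inner_self_eq_zero (𝕜 := ℝ) (x := TX X X), hTX]
        exact T.map_eq_zero_of_eq _ (i := 0) (j := 1) rfl (by decide)
      have hR : (RT TX X Y) X = 0 := by rw [h X Y]; rfl
      have hinner : ⟪(RT TX X Y) X, Y⟫ = 0 := by rw [hR, inner_zero_left]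
      have expand : (RT TX X Y) X
          = TX X (TX Y X) - TX Y (TX X X) + (2 : ℝ) • TX (TX X Y) X := by
        simp [RT]
      have e2 : TX Y (TX X X) = 0 := by rw [hXX]; simp
      have e1 : ⟪TX X (TX Y X), Y⟫ = ⟪TX X Y, TX X Y⟫ := by
        calc ⟪TX X (TX Y X), Y⟫ = T ![X, TX Y X, Y] := hTX _ _ _
          _ = -T ![X, Y, TX Y X] := hsw12 _ _ _
          _ = -⟪TX X Y, TX Y X⟫ := by rw [hTX]
          _ = -⟪TX Y X, TX X Y⟫ := by rw [real_inner_comm]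
          _ = -T ![Y, X, TX X Y] := by rw [hTX]
          _ = T ![X, Y, TX X Y] := by rw [hsw01]; ring
          _ = ⟪TX X Y, TX X Y⟫ := (hTX _ _ _).symm
      have e3 : ⟪TX (TX X Y) X, Y⟫ = ⟪TX X Y, TX X Y⟫ := by
        calc ⟪TX (TX X Y) X, Y⟫ = T ![TX X Y, X, Y] := hTX _ _ _
          _ = -T ![X, TX X Y, Y] := hsw01 _ _ _
          _ = -(-T ![X, Y, TX X Y]) := by rw [hsw12]
          _ = T ![X, Y, TX X Y] := by ring
          _ = ⟪TX X Y, TX X Y⟫ := (hTX _ _ _).symm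
      rw [expand] at hinner
      rw [inner_add_left, inner_sub_left, e2, inner_zero_left, sub_zero,
        real_inner_smul_left, e1, e3] at hinner
      have h3 : (3 : ℝ) * ⟪TX X Y, TX X Y⟫ = 0 := by linarith
      have : ⟪TX X Y, TX X Y⟫ = 0 := by linarith
      exact inner_self_eq_zero.mp this
    ext v
    have hv : v = ![v 0, v 1, v 2] := by
      funext i; fin_cases i <;> rfl
    rw [hv, ← hTX, key, inner_zero_left]
    simp
  · intro hT X Y
    have key : ∀ A B : V, TX A B = 0 := by
      intro A B
      rw [← inner_self_eq_zero (𝕜 := ℝ) (x := TX A B), hTX, hT]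
      rfl
    ext Z
    simp [RT, key]
end
end

section
/- Let g ⊆ so(V) be a Lie subalgebra and let V = V₀ ⊕ V₁ ⊕ ⋯ ⊕ V_d be an orthogonal decomposition in which g acts trivially on V₀ and irreducibly on each Vₖ for 1 ≤ k ≤ d. For each k let ĝₖ = {x ∈ g : x vanishes on Vⱼ for all j ≠ k}. Then a 3-form T ∈ Λ³V satisfies T_X ∈ g for all X ∈ V if and only if T = Σₖ₌₁^d Tₖ, where each Tₖ ∈ Λ³V vanishes whenever one of its arguments is orthogonal to Vₖ and satisfies (Tₖ)_X ∈ ĝₖ for all X ∈ V. -/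
open scoped RealInnerProductSpace BigOperators

noncomputable section

variable {V : Type} [NormedAddCommGroup V] [InnerProductSpace ℝ V] [FiniteDimensional ℝ V]

set_option linter.unusedSectionVars false

private lemma vec_eta3 (v : Fin 3 → V) : v = ![v 0, v 1, v 2] := by
  funext i; fin_cases i <;> rfl

private lemma upd3_0 (a b c w : V) : Function.update ![a,b,c] 0 w = ![w,b,c] := by
  funext i; fin_cases i <;> simp

private lemma alt_cyc (T : AlternatingMap ℝ V ℝ (Fin 3)) (a b c : V) :
    T ![a,b,c] = T ![b,c,a] := by
  have h1 := T.map_swap (v := ![a,b,c]) (i := (0:Fin 3)) (j := 1) (by decide)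
  have h2 := T.map_swap (v := ![b,a,c]) (i := (1:Fin 3)) (j := 2) (by decide)
  have e1 : ![a,b,c] ∘ Equiv.swap (0:Fin 3) 1 = ![b,a,c] := by
    funext i; fin_cases i <;> simp [Equiv.swap_apply_def]
  have e2 : ![b,a,c] ∘ Equiv.swap (1:Fin 3) 2 = ![b,c,a] := by
    funext i; fin_cases i <;> simp [Equiv.swap_apply_def]
  rw [e1] at h1; rw [e2] at h2
  rw [h2, h1, neg_neg]

private lemma alt_swap12 (T : AlternatingMap ℝ V ℝ (Fin 3)) (a b c : V) :
    T ![a,b,c] = - T ![a,c,b] := by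
  have h := T.map_swap (v := ![a,c,b]) (i := (1:Fin 3)) (j := 2) (by decide)
  have e : ![a,c,b] ∘ Equiv.swap (1:Fin 3) 2 = ![a,b,c] := by
    funext i; fin_cases i <;> simp [Equiv.swap_apply_def]
  rw [e] at h; rw [h]

private lemma alt_add0 (T : AlternatingMap ℝ V ℝ (Fin 3)) (a a' b c : V) :
    T ![a + a', b, c] = T ![a,b,c] + T ![a',b,c] := by
  have h := T.toMultilinearMap.map_update_add ![a,b,c] 0 a a'
  simpa [upd3_0] using h

private lemma alt_sum0 {ι : Type*} (T : AlternatingMap ℝ V ℝ (Fin 3)) (s : Finset ι)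
    (f : ι → V) (b c : V) :
    T ![∑ i ∈ s, f i, b, c] = ∑ i ∈ s, T ![f i, b, c] := by
  have h := T.toMultilinearMap.map_update_sum s 0 f ![0,b,c]
  simpa [upd3_0] using h

private lemma alt_sum_apply {ι : Type*} (s : Finset ι) (f : ι → AlternatingMap ℝ V ℝ (Fin 3))
    (v : Fin 3 → V) : (∑ i ∈ s, f i) v = ∑ i ∈ s, f i v := by
  induction s using Finset.cons_induction with
  | empty => simp
  | cons a t ha ih => rw [Finset.sum_cons, Finset.sum_cons, AlternatingMap.add_apply, ih]

private lemma alt_comp_vec (T : AlternatingMap ℝ V ℝ (Fin 3)) (f : V →ₗ[ℝ] V) (X Y Z : V) :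
    (T.compLinearMap f) ![X,Y,Z] = T ![f X, f Y, f Z] := by
  rw [AlternatingMap.compLinearMap_apply]
  congr 1; funext i; fin_cases i <;> rfl

theorem stmt_11
    (g : Submodule ℝ (V →ₗ[ℝ] V))
    (hgskew : ∀ A ∈ g, IsSkew A)
    (hglie : ∀ A ∈ g, ∀ B ∈ g, A ∘ₗ B - B ∘ₗ A ∈ g)
    (d : ℕ) (V0 : Submodule ℝ V) (Vs : Fin d → Submodule ℝ V)
    -- orthogonal decomposition `V = V₀ ⊕ V₁ ⊕ ⋯ ⊕ V_d`
    (horth0 : ∀ k, ∀ x ∈ V0, ∀ y ∈ Vs k, ⟪x, y⟫ = 0)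
    (horth : ∀ i j, i ≠ j → ∀ x ∈ Vs i, ∀ y ∈ Vs j, ⟪x, y⟫ = 0)
    (hsup : (V0 ⊔ ⨆ k, Vs k) = ⊤)
    -- `g` acts trivially on `V₀` and irreducibly on each `Vₖ`
    (htriv : ∀ A ∈ g, ∀ x ∈ V0, A x = 0)
    (hinv : ∀ k, ∀ A ∈ g, ∀ x ∈ Vs k, A x ∈ Vs k)
    (hirr : ∀ k, ∀ W : Submodule ℝ V, W ≤ Vs k →
      (∀ A ∈ g, ∀ x ∈ W, A x ∈ W) → W = ⊥ ∨ W = Vs k)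
    (T : AlternatingMap ℝ V ℝ (Fin 3)) :
    -- `T` is in the skew-symmetric prolongation of `g` iff it splits as `Σ Tₖ`
    (∀ X : V, ∃ A ∈ g, ∀ Y Z : V, ⟪A Y, Z⟫ = T ![X, Y, Z]) ↔
      ∃ Ts : Fin d → AlternatingMap ℝ V ℝ (Fin 3),
        T = ∑ k, Ts k ∧
        ∀ k,
          -- `Tₖ` vanishes whenever one of its arguments is orthogonal to `Vₖ`
          (∀ (X : Fin 3 → V) (i : Fin 3),
            (∀ v ∈ Vs k, ⟪X i, v⟫ = 0) → Ts k X = 0) ∧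
          -- `(Tₖ)_X ∈ ĝₖ = {x ∈ g : x vanishes on Vⱼ for all j ≠ k}` for all `X`
          (∀ X : V, ∃ A, A ∈ g ∧ (∀ x ∈ V0, A x = 0) ∧
            (∀ j, j ≠ k → ∀ x ∈ Vs j, A x = 0) ∧
            ∀ Y Z : V, ⟪A Y, Z⟫ = Ts k ![X, Y, Z]) := by
  classical
  set P : Fin d → (V →ₗ[ℝ] V) :=
    fun k => (Vs k).subtype ∘ₗ ((Vs k).orthogonalProjectionOnto).toLinearMap with hPdef
  set P0 : V →ₗ[ℝ] V := V0.subtype ∘ₗ (V0.orthogonalProjectionOnto).toLinearMap with hP0def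
  have hPmem : ∀ k x, P k x ∈ Vs k := fun k x => SetLike.coe_mem _
  have hP0mem : ∀ x, P0 x ∈ V0 := fun x => SetLike.coe_mem _
  have hPinner : ∀ k (x : V), ∀ v ∈ Vs k, ⟪P k x, v⟫ = ⟪x, v⟫ := by
    intro k x v hv
    have h := Submodule.starProjection_inner_eq_zero (K := Vs k) x v hv
    rw [Submodule.starProjection_apply] at h
    simp only [hPdef, LinearMap.comp_apply, Submodule.subtype_apply,
      ContinuousLinearMap.coe_coe]
    rw [inner_sub_left] at h
    linarith
  have hP0inner : ∀ (x : V), ∀ v ∈ V0, ⟪P0 x, v⟫ = ⟪x, v⟫ := by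
    intro x v hv
    have h := Submodule.starProjection_inner_eq_zero (K := V0) x v hv
    rw [Submodule.starProjection_apply] at h
    simp only [hP0def, LinearMap.comp_apply, Submodule.subtype_apply,
      ContinuousLinearMap.coe_coe]
    rw [inner_sub_left] at h
    linarith
  have hPzero : ∀ k (x : V), (∀ v ∈ Vs k, ⟪x, v⟫ = 0) → P k x = 0 := by
    intro k x hx
    have hxo : x ∈ (Vs k)ᗮ := by
      rw [Submodule.mem_orthogonal]
      intro u hu
      rw [real_inner_comm]
      exact hx u hu
    have h2 : (Vs k).orthogonalProjectionOnto x = 0 := Submodule.orthogonalProjectionOnto_eq_zero_iff.mpr hxo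
    simp [hPdef, h2]
  have decomp : ∀ x : V, x = P0 x + ∑ k, P k x := by
    intro x
    set w := x - (P0 x + ∑ k, P k x) with hw
    have hle : V0 ⊔ ⨆ k, Vs k ≤ (ℝ ∙ w)ᗮ := by
      apply sup_le
      · intro v hv
        rw [Submodule.mem_orthogonal_singleton_iff_inner_right]
        rw [hw, inner_sub_left, inner_add_left, sum_inner]
        rw [hP0inner x v hv]
        have hz : ∀ k ∈ Finset.univ, ⟪P k x, v⟫ = (0:ℝ) := by
          intro k _
          rw [real_inner_comm]
          exact horth0 k v hv (P k x) (hPmem k x)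
        rw [Finset.sum_congr rfl hz]
        simp
      · apply iSup_le
        intro j v hv
        rw [Submodule.mem_orthogonal_singleton_iff_inner_right]
        rw [hw, inner_sub_left, inner_add_left, sum_inner]
        have h0 : ⟪P0 x, v⟫ = (0:ℝ) := horth0 j (P0 x) (hP0mem x) v hv
        have hsumv : ∑ k, ⟪P k x, v⟫ = ⟪x, v⟫ := by
          rw [Finset.sum_eq_single j]
          · exact hPinner j x v hv
          · intro k _ hk
            exact horth k j hk (P k x) (hPmem k x) v hv
          · simp
        rw [h0, hsumv]
        ring
    have hwmem : w ∈ (ℝ ∙ w)ᗮ := by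
      have h := hsup ▸ hle
      exact h Submodule.mem_top
    have hww : ⟪w, w⟫ = (0:ℝ) :=
      Submodule.mem_orthogonal_singleton_iff_inner_right.mp hwmem
    have hw0 : w = 0 := inner_self_eq_zero.mp hww
    rw [hw] at hw0
    exact (sub_eq_zero.mp hw0)
  constructor
  · intro hT
    have hzero0 : ∀ Y Z : V, ∀ x ∈ V0, T ![x, Y, Z] = 0 := by
      intro Y Z x hx
      obtain ⟨A, hAg, hA⟩ := hT Z
      rw [alt_cyc, alt_cyc, ← hA x Y, htriv A hAg x hx, inner_zero_left]
    have hmix : ∀ i j, i ≠ j → ∀ x ∈ Vs i, ∀ y ∈ Vs j, ∀ Z : V, T ![x, y, Z] = 0 := by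
      intro i j hij x hx y hy Z
      rw [alt_cyc, alt_cyc]
      obtain ⟨A, hAg, hA⟩ := hT Z
      rw [← hA x y]
      exact horth i j hij (A x) (hinv i A hAg x hx) y hy
    have hexp0 : ∀ X Y Z : V, T ![X, Y, Z] = ∑ k, T ![P k X, Y, Z] := by
      intro X Y Z
      conv_lhs => rw [decomp X]
      rw [alt_add0, alt_sum0, hzero0 Y Z (P0 X) (hP0mem X), zero_add]
    have hred1 : ∀ k, ∀ x ∈ Vs k, ∀ Y Z : V, T ![x, Y, Z] = T ![x, P k Y, Z] := by
      intro k x hx Y Z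
      rw [alt_cyc, hexp0 Y Z x, Finset.sum_eq_single k]
      · exact (alt_cyc T x (P k Y) Z).symm
      · intro j _ hjk
        rw [alt_cyc, alt_cyc]
        exact hmix k j (Ne.symm hjk) x hx (P j Y) (hPmem j Y) Z
      · simp
    have hred2 : ∀ k, ∀ x ∈ Vs k, ∀ Y Z : V, T ![x, Y, Z] = T ![x, Y, P k Z] := by
      intro k x hx Y Z
      rw [alt_swap12 T x Y Z, hred1 k x hx Z Y, alt_swap12 T x (P k Z) Y, neg_neg]
    have hTk : ∀ k (X Y Z : V), T ![P k X, P k Y, P k Z] = T ![P k X, Y, Z] := by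
      intro k X Y Z
      rw [← hred1 k (P k X) (hPmem k X) Y (P k Z), ← hred2 k (P k X) (hPmem k X) Y Z]
    refine ⟨fun k => T.compLinearMap (P k), ?_, ?_⟩
    · ext v
      rw [vec_eta3 v]
      rw [alt_sum_apply, hexp0 (v 0) (v 1) (v 2)]
      refine Finset.sum_congr rfl fun k _ => ?_
      rw [alt_comp_vec, hTk]
    · intro k
      constructor
      · intro X i h
        have hPz : (⇑(P k) ∘ X) i = 0 := hPzero k (X i) h
        rw [AlternatingMap.compLinearMap_apply]
        exact T.map_coord_zero i hPz
      · intro X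
        obtain ⟨A, hAg, hA⟩ := hT (P k X)
        refine ⟨A, hAg, htriv A hAg, ?_, ?_⟩
        · intro j hjk x hx
          have hz : ⟪A x, A x⟫ = (0:ℝ) := by
            rw [hA x (A x)]
            exact hmix k j (Ne.symm hjk) (P k X) (hPmem k X) x hx (A x)
          exact inner_self_eq_zero.mp hz
        · intro Y Z
          rw [alt_comp_vec, hTk k X Y Z]
          exact hA Y Z
  · rintro ⟨Ts, hTsum, hprop⟩ X
    choose A hAg hA0 hAj hAT using fun k => (hprop k).2 X
    refine ⟨∑ k, A k, Submodule.sum_mem g fun k _ => hAg k, fun Y Z => ?_⟩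
    rw [hTsum]
    have h1 : ((∑ k, A k) Y) = ∑ k, A k Y := by simp
    rw [h1, alt_sum_apply, sum_inner]
    exact Finset.sum_congr rfl fun k _ => hAT k Y Z
end
end

section
/- Let g ⊆ so(V) be a Lie subalgebra. The characteristic 4-form T^g vanishes if and only if the bilinear map R(X,Y) := π_g(X∧Y) satisfies the first Bianchi identity R(X,Y)Z + R(Y,Z)X + R(Z,X)Y = 0 for all X,Y,Z ∈ V, i.e. belongs to K(g,V). Here X∧Y ∈ so(V) is the endomorphism Z ↦ ⟨X,Z⟩Y − ⟨Y,Z⟩X and π_g is the orthogonal projection of Λ²V ≅ so(V) onto g. -/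
open scoped RealInnerProductSpace BigOperators

noncomputable section

variable {V : Type} [NormedAddCommGroup V] [InnerProductSpace ℝ V] [FiniteDimensional ℝ V]

/-- The inner product on `Λ²V ≅ so(V)` for which `{eᵢ∧eⱼ : i<j}` is orthonormal,
computed in the standard orthonormal basis of `V`. -/
def formInner (F G : V → V) : ℝ :=
  ∑ i, ∑ j ∈ Finset.Ioi i,
    ⟪F (stdOrthonormalBasis ℝ V i), stdOrthonormalBasis ℝ V j⟫ *
      ⟪G (stdOrthonormalBasis ℝ V i), stdOrthonormalBasis ℝ V j⟫

/-- `(α ∧ α)(X,Y,Z,W)` where `α` is the 2-form of the skew endomorphism `A`. -/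
def wedgeSelf (A : V →ₗ[ℝ] V) (X Y Z W : V) : ℝ :=
  ⟪A X, Y⟫ * ⟪A Z, W⟫ - ⟪A X, Z⟫ * ⟪A Y, W⟫ + ⟪A X, W⟫ * ⟪A Y, Z⟫ +
    ⟪A Y, Z⟫ * ⟪A X, W⟫ - ⟪A Y, W⟫ * ⟪A X, Z⟫ + ⟪A Z, W⟫ * ⟪A X, Y⟫

/-- The endomorphism `X ∧ Y : Z ↦ ⟨X,Z⟩Y − ⟨Y,Z⟩X`. -/
def wedgeVec (X Y : V) : V → V := fun Z => ⟪X, Z⟫ • Y - ⟪Y, Z⟫ • X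

/-! ### Auxiliary lemmas -/

lemma half_sum {n : ℕ} (f : Fin n → Fin n → ℝ)
    (hsymm : ∀ i j, f j i = f i j) (hdiag : ∀ i, f i i = 0) :
    2 * (∑ i, ∑ j ∈ Finset.Ioi i, f i j) = ∑ i, ∑ j, f i j := by
  have h := Finset.sum_sum_Ioi_add_eq_sum_sum_off_diag f
  calc 2 * (∑ i, ∑ j ∈ Finset.Ioi i, f i j)
      = ∑ i, ∑ j ∈ Finset.Ioi i, (f j i + f i j) := by
        rw [Finset.mul_sum]
        refine Finset.sum_congr rfl fun i _ => ?_
        rw [Finset.mul_sum]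
        refine Finset.sum_congr rfl fun j _ => ?_
        rw [hsymm]; ring
    _ = ∑ i, ∑ j, f j i := by
        rw [h]
        refine Finset.sum_congr rfl fun i _ => ?_
        refine Finset.sum_subset (Finset.subset_univ _) fun j _ hj => ?_
        simp only [Finset.mem_compl, Finset.mem_singleton, not_not] at hj
        rw [hj]; exact hdiag i
    _ = ∑ i, ∑ j, f i j := Finset.sum_comm

lemma double_inner_sum (A : V →ₗ[ℝ] V) (hA : IsSkew A) (Z W : V) :
    ∑ i, ∑ j, ⟪Z, stdOrthonormalBasis ℝ V i⟫ * ⟪W, stdOrthonormalBasis ℝ V j⟫ *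
      ⟪A (stdOrthonormalBasis ℝ V i), stdOrthonormalBasis ℝ V j⟫ = ⟪A Z, W⟫ := by
  set b := stdOrthonormalBasis ℝ V with hb
  have step1 : ∀ i, ∑ j, ⟪W, b j⟫ * ⟪A (b i), b j⟫ = ⟪A (b i), W⟫ := by
    intro i
    have := b.sum_inner_mul_inner (A (b i)) W
    calc ∑ j, ⟪W, b j⟫ * ⟪A (b i), b j⟫
        = ∑ j, ⟪A (b i), b j⟫ * ⟪b j, W⟫ := by
          refine Finset.sum_congr rfl fun j _ => ?_
          rw [real_inner_comm W (b j)]; ring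
      _ = ⟪A (b i), W⟫ := this
  calc ∑ i, ∑ j, ⟪Z, b i⟫ * ⟪W, b j⟫ * ⟪A (b i), b j⟫
      = ∑ i, ⟪Z, b i⟫ * ⟪A (b i), W⟫ := by
        refine Finset.sum_congr rfl fun i _ => ?_
        rw [← step1 i, Finset.mul_sum]
        refine Finset.sum_congr rfl fun j _ => ?_
        ring
    _ = ∑ i, ⟪Z, b i⟫ * (- ⟪b i, A W⟫) := by
        refine Finset.sum_congr rfl fun i _ => ?_
        rw [hA (b i) W]
    _ = - ∑ i, ⟪Z, b i⟫ * ⟪b i, A W⟫ := by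
        rw [← Finset.sum_neg_distrib]
        exact Finset.sum_congr rfl fun i _ => by ring
    _ = - ⟪Z, A W⟫ := by rw [b.sum_inner_mul_inner Z (A W)]
    _ = ⟪A Z, W⟫ := by rw [← hA Z W]

lemma formInner_wedgeVec (A : V →ₗ[ℝ] V) (hA : IsSkew A) (X Y : V) :
    formInner (wedgeVec X Y) ⇑A = ⟪A X, Y⟫ := by
  set b := stdOrthonormalBasis ℝ V with hb
  set f : Fin (Module.finrank ℝ V) → Fin (Module.finrank ℝ V) → ℝ :=
    fun i j => ⟪wedgeVec X Y (b i), b j⟫ * ⟪A (b i), b j⟫ with hf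
  have hexp : ∀ i j, f i j =
      (⟪X, b i⟫ * ⟪Y, b j⟫ - ⟪Y, b i⟫ * ⟪X, b j⟫) * ⟪A (b i), b j⟫ := by
    intro i j
    simp only [hf, wedgeVec, inner_sub_left, real_inner_smul_left]
  have hsymm : ∀ i j, f j i = f i j := by
    intro i j
    rw [hexp, hexp]
    have h1 : ⟪A (b j), b i⟫ = - ⟪A (b i), b j⟫ := by
      rw [hA (b j) (b i), real_inner_comm]
    rw [h1]; ring
  have hdiag : ∀ i, f i i = 0 := by intro i; rw [hexp]; ring
  have h2 := half_sum f hsymm hdiag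
  have hfull : ∑ i, ∑ j, f i j = 2 * ⟪A X, Y⟫ := by
    have e1 := double_inner_sum A hA X Y
    have e2 := double_inner_sum A hA Y X
    have e3 : ⟪A Y, X⟫ = - ⟪A X, Y⟫ := by rw [hA Y X, real_inner_comm]
    calc ∑ i, ∑ j, f i j
        = ∑ i, ∑ j, (⟪X, b i⟫ * ⟪Y, b j⟫ * ⟪A (b i), b j⟫
            - ⟪Y, b i⟫ * ⟪X, b j⟫ * ⟪A (b i), b j⟫) := by
          refine Finset.sum_congr rfl fun i _ => Finset.sum_congr rfl fun j _ => ?_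
          rw [hexp]; ring
      _ = (∑ i, ∑ j, ⟪X, b i⟫ * ⟪Y, b j⟫ * ⟪A (b i), b j⟫)
            - ∑ i, ∑ j, ⟪Y, b i⟫ * ⟪X, b j⟫ * ⟪A (b i), b j⟫ := by
          simp [Finset.sum_sub_distrib]
      _ = ⟪A X, Y⟫ - ⟪A Y, X⟫ := by rw [e1, e2]
      _ = 2 * ⟪A X, Y⟫ := by rw [e3]; ring
  have hdef : formInner (wedgeVec X Y) ⇑A = ∑ i, ∑ j ∈ Finset.Ioi i, f i j := rfl
  rw [hdef]; linarith [h2.trans hfull]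

lemma formInner_sub (F₁ F₂ G : V → V) :
    formInner (fun Z => F₁ Z - F₂ Z) G = formInner F₁ G - formInner F₂ G := by
  unfold formInner
  simp [inner_sub_left, sub_mul, Finset.sum_sub_distrib]

lemma formInner_linsum {N : ℕ} (c : Fin N → ℝ) (α : Fin N → (V →ₗ[ℝ] V)) (G : V → V) :
    formInner (⇑(∑ k, c k • α k)) G = ∑ k, c k * formInner (⇑(α k)) G := by
  unfold formInner
  simp only [LinearMap.coe_sum, LinearMap.smul_apply, Finset.sum_apply,
    sum_inner, real_inner_smul_left, Finset.sum_mul, Finset.mul_sum]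
  rw [Finset.sum_comm]
  refine Finset.sum_congr rfl fun i _ => ?_
  rw [Finset.sum_comm]
  simp [mul_assoc]

theorem stmt_14
    (g : Submodule ℝ (V →ₗ[ℝ] V))
    (hgskew : ∀ A ∈ g, IsSkew A)
    (hglie : ∀ A ∈ g, ∀ B ∈ g, A ∘ₗ B - B ∘ₗ A ∈ g)
    -- `α` is an orthonormal basis of `g ⊆ Λ²V`
    (N : ℕ) (α : Fin N → (V →ₗ[ℝ] V))
    (hα : ∀ k, α k ∈ g)
    (hon : ∀ k l, formInner (⇑(α k)) (⇑(α l)) = if k = l then 1 else 0)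
    (hspan : ∀ A ∈ g, A ∈ Submodule.span ℝ (Set.range α))
    -- `R X Y = π_g (X ∧ Y)` is the orthogonal projection of `X ∧ Y` onto `g`
    (R : V → V → (V →ₗ[ℝ] V))
    (hRg : ∀ X Y : V, R X Y ∈ g)
    (hRperp : ∀ X Y : V, ∀ G ∈ g,
      formInner (fun Z => wedgeVec X Y Z - R X Y Z) (⇑G) = 0) :
    -- the characteristic 4-form `T^g = Σₖ αₖ ∧ αₖ` vanishes iff `R ∈ K(g,V)`
    (∀ X Y Z W : V, (∑ k, wedgeSelf (α k) X Y Z W) = 0) ↔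
      (∀ X Y Z : V, R X Y Z + R Y Z X + R Z X Y = 0) := by
  have hskewα : ∀ k, IsSkew (α k) := fun k => hgskew _ (hα k)
  -- Expansion of `R` in the orthonormal basis
  have hRexp : ∀ X Y : V, R X Y = ∑ k, ⟪α k X, Y⟫ • α k := by
    intro X Y
    obtain ⟨c, hc⟩ := (Submodule.mem_span_range_iff_exists_fun ℝ).mp (hspan _ (hRg X Y))
    have hcl : ∀ l, c l = ⟪α l X, Y⟫ := by
      intro l
      have h1 : formInner (⇑(R X Y)) (⇑(α l)) = c l := by
        rw [← hc, formInner_linsum]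
        simp [hon]
      have h2 := hRperp X Y (α l) (hα l)
      rw [formInner_sub (wedgeVec X Y) (fun Z => R X Y Z) (⇑(α l))] at h2
      have h3 := formInner_wedgeVec (α l) (hskewα l) X Y
      have h4 : formInner (fun Z => R X Y Z) (⇑(α l)) = c l := h1
      rw [h3, h4] at h2
      linarith
    rw [← hc]
    exact Finset.sum_congr rfl fun k _ => by rw [hcl]
  -- the key identity: `T^g(X,Y,Z,W) = 2⟨b(X,Y,Z), W⟩`
  have hkey : ∀ X Y Z W : V, (∑ k, wedgeSelf (α k) X Y Z W)
      = 2 * ⟪R X Y Z + R Y Z X + R Z X Y, W⟫ := by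
    intro X Y Z W
    have hR : ∀ P Q S : V, ⟪R P Q S, W⟫ = ∑ k, ⟪α k P, Q⟫ * ⟪α k S, W⟫ := by
      intro P Q S
      rw [hRexp P Q]
      simp [sum_inner, real_inner_smul_left]
    have hterm : ∀ k, wedgeSelf (α k) X Y Z W =
        2 * (⟪α k X, Y⟫ * ⟪α k Z, W⟫ + ⟪α k Y, Z⟫ * ⟪α k X, W⟫
          + ⟪α k Z, X⟫ * ⟪α k Y, W⟫) := by
      intro k
      have hsk : ⟪α k Z, X⟫ = - ⟪α k X, Z⟫ := by
        rw [hskewα k Z X, real_inner_comm]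
      unfold wedgeSelf
      rw [hsk]; ring
    calc ∑ k, wedgeSelf (α k) X Y Z W
        = ∑ k, 2 * (⟪α k X, Y⟫ * ⟪α k Z, W⟫ + ⟪α k Y, Z⟫ * ⟪α k X, W⟫
            + ⟪α k Z, X⟫ * ⟪α k Y, W⟫) := Finset.sum_congr rfl fun k _ => hterm k
      _ = 2 * ((∑ k, ⟪α k X, Y⟫ * ⟪α k Z, W⟫) + (∑ k, ⟪α k Y, Z⟫ * ⟪α k X, W⟫)
            + (∑ k, ⟪α k Z, X⟫ * ⟪α k Y, W⟫)) := by
          simp only [Finset.mul_sum, mul_add, Finset.sum_add_distrib]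
      _ = 2 * ⟪R X Y Z + R Y Z X + R Z X Y, W⟫ := by
          rw [inner_add_left, inner_add_left, hR X Y Z, hR Y Z X, hR Z X Y]
  constructor
  · intro hT X Y Z
    have hW : ∀ W : V, ⟪R X Y Z + R Y Z X + R Z X Y, W⟫ = 0 := by
      intro W
      have h := hkey X Y Z W
      rw [hT X Y Z W] at h
      linarith
    exact inner_self_eq_zero.mp (hW _)
  · intro hB X Y Z W
    rw [hkey, hB X Y Z]
    simp
end
end

section
/- Let T ∈ ΛᵖV (p ≥ 3) satisfy the Plücker-type relations. Then there exist an orthogonal decomposition V = V₀ ⊕ V₁ ⊕ ⋯ ⊕ V_d and a decomposition T = Σₖ₌₁^d Tₖ such that: each Tₖ ∈ ΛᵖV vanishes whenever one of its arguments is orthogonal to Vₖ; each Tₖ satisfies the Plücker-type relations; and each Tₖ is irreducible, i.e. the Lie subalgebra of so(Vₖ) generated by the endomorphisms (ζ₁⌟⋯⌟ζ_{p−2}⌟Tₖ)^♯, ζᵢ ∈ Vₖ, acts irreducibly on Vₖ. -/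
open scoped RealInnerProductSpace BigOperators

noncomputable section

variable {V : Type} [NormedAddCommGroup V] [InnerProductSpace ℝ V] [FiniteDimensional ℝ V]

attribute [local instance 100] LieRing.ofAssociativeRing

/-- The Plücker-type relations for a `(m+2)`-form `T`: for all `ζ₁,…,ζ_m ∈ V`, the
skew endomorphism `F` dual to the 2-form `ζ₁⌟⋯⌟ζ_m⌟T` annihilates `T` under the
natural `so(V)`-action on forms. -/
def PluckerRel {m : ℕ} (T : AlternatingMap ℝ V ℝ (Fin (m + 2))) : Prop :=
  ∀ ζ : Fin m → V, ∃ F : V →ₗ[ℝ] V,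
    (∀ Y Z : V, ⟪F Y, Z⟫ = T (Fin.snoc (Fin.snoc ζ Y) Z)) ∧
    (∀ X : Fin (m + 2) → V, ∑ j, T (Function.update X j (F (X j))) = 0)

/-- The stabilizer of a submodule, as a Lie subalgebra of endomorphisms. -/
def stabAlg (W : Submodule ℝ V) : LieSubalgebra ℝ (Module.End ℝ V) where
  carrier := {A | ∀ x ∈ W, A x ∈ W}
  add_mem' := fun {a b} ha hb x hx => by
    simpa using W.add_mem (ha x hx) (hb x hx)
  zero_mem' := fun x hx => by simpa using W.zero_mem
  smul_mem' := fun c {a} ha x hx => by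
    simpa using W.smul_mem c (ha x hx)
  lie_mem' := fun {a b} ha hb x hx => by
    have : ⁅a, b⁆ x = a (b x) - b (a x) := by
      simp [Ring.lie_def, LinearMap.sub_apply, Module.End.mul_apply]
    rw [this]
    exact W.sub_mem (ha _ (hb x hx)) (hb _ (ha x hx))

lemma mem_stabAlg {W : Submodule ℝ V} {A : Module.End ℝ V} :
    A ∈ stabAlg W ↔ ∀ x ∈ W, A x ∈ W := Iff.rfl

/-- Skew endomorphisms form a Lie subalgebra. -/
def skewAlg (V : Type) [NormedAddCommGroup V] [InnerProductSpace ℝ V] :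
    LieSubalgebra ℝ (Module.End ℝ V) where
  carrier := {A | ∀ x y : V, ⟪A x, y⟫ = - ⟪x, A y⟫}
  add_mem' := fun {a b} ha hb x y => by
    simp only [LinearMap.add_apply, inner_add_left, inner_add_right, ha x y, hb x y, neg_add]
  zero_mem' := fun x y => by simp
  smul_mem' := fun c {a} ha x y => by
    simp only [LinearMap.smul_apply, real_inner_smul_left, real_inner_smul_right, ha x y,
      mul_neg]
  lie_mem' := fun {a b} ha hb x y => by
    have h1 : ⁅a, b⁆ x = a (b x) - b (a x) := by
      simp [Ring.lie_def, LinearMap.sub_apply, Module.End.mul_apply]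
    have h2 : ⁅a, b⁆ y = a (b y) - b (a y) := by
      simp [Ring.lie_def, LinearMap.sub_apply, Module.End.mul_apply]
    rw [h1, h2, inner_sub_left, inner_sub_right, ha _ y, hb _ y, ha x _, hb x _]
    ring

lemma mem_skewAlg {A : Module.End ℝ V} :
    A ∈ skewAlg V ↔ ∀ x y : V, ⟪A x, y⟫ = - ⟪x, A y⟫ := Iff.rfl

/-- Decompose an invariant subspace into minimal invariant mutually orthogonal pieces. -/
lemma decomp (S : Set (Module.End ℝ V))
    (hskew : ∀ A ∈ S, ∀ x y : V, ⟪A x, y⟫ = - ⟪x, A y⟫) :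
    ∀ (N : ℕ) (U : Submodule ℝ V), Module.finrank ℝ U ≤ N →
    (∀ A ∈ S, ∀ x ∈ U, A x ∈ U) →
    ∃ (n : ℕ) (f : Fin n → Submodule ℝ V),
      (∀ k, f k ≠ ⊥) ∧
      (∀ k, ∀ A ∈ S, ∀ x ∈ f k, A x ∈ f k) ∧
      (∀ k, ∀ W ≤ f k, W ≠ ⊥ → (∀ A ∈ S, ∀ x ∈ W, A x ∈ W) → W = f k) ∧
      (∀ i j, i ≠ j → ∀ x ∈ f i, ∀ y ∈ f j, ⟪x, y⟫ = 0) ∧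
      (⨆ k, f k) = U := by
  intro N
  induction N with
  | zero =>
    intro U hU _
    have hUbot : U = ⊥ := by
      rw [← Submodule.finrank_eq_zero (R := ℝ) (M := V)]
      omega
    exact ⟨0, Fin.elim0, fun k => k.elim0, fun k => k.elim0, fun k => k.elim0,
      fun i => i.elim0, by rw [iSup_of_empty]; exact hUbot.symm⟩
  | succ N ih =>
    intro U hU hinv
    by_cases hUbot : U = ⊥
    · exact ⟨0, Fin.elim0, fun k => k.elim0, fun k => k.elim0, fun k => k.elim0,
        fun i => i.elim0, by rw [iSup_of_empty]; exact hUbot.symm⟩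
    · -- pick a minimal nonzero invariant subspace of U
      set P : Submodule ℝ V → Prop :=
        fun W => W ≤ U ∧ W ≠ ⊥ ∧ ∀ A ∈ S, ∀ x ∈ W, A x ∈ W with hP
      have hPU : P U := ⟨le_rfl, hUbot, hinv⟩
      obtain ⟨W, hPW, hmin⟩ :
          ∃ W, P W ∧ ∀ W', P W' → Module.finrank ℝ W ≤ Module.finrank ℝ W' := by
        have hs : {n | ∃ W, P W ∧ Module.finrank ℝ W = n}.Nonempty :=
          ⟨_, U, hPU, rfl⟩
        obtain ⟨W, hW, hWr⟩ := Nat.sInf_mem hs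
        exact ⟨W, hW, fun W' hW' => hWr ▸ Nat.sInf_le ⟨W', hW', rfl⟩⟩
      obtain ⟨hWU, hWne, hWinv⟩ := hPW
      set U' : Submodule ℝ V := Wᗮ ⊓ U with hU'def
      have hsupU : W ⊔ U' = U := Submodule.sup_orthogonal_inf_of_hasOrthogonalProjection hWU
      have hU'inv : ∀ A ∈ S, ∀ x ∈ U', A x ∈ U' := by
        intro A hA x hx
        refine ⟨?_, hinv A hA x hx.2⟩
        intro w hw
        rw [real_inner_comm, hskew A hA x w]
        rw [real_inner_comm]
        simpa using hx.1 _ (hWinv A hA w hw)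
      have hU'lt : Module.finrank ℝ U' ≤ N := by
        by_contra h
        push_neg at h
        have hle : U' ≤ U := inf_le_right
        have hUeq : U' = U := by
          apply Submodule.eq_of_le_of_finrank_le hle
          omega
        have : W = ⊥ := by
          rw [eq_bot_iff]
          intro w hw
          have hw' : w ∈ Wᗮ := (hUeq ▸ hWU hw).1
          have : ⟪w, w⟫ = 0 := by
            have := hw' w hw
            rwa [real_inner_comm] at this
          simpa using inner_self_eq_zero.mp this
        exact hWne this
      obtain ⟨n, f, hbot, hinvf, hminf, horth, hsup⟩ := ih U' hU'lt hU'inv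
      have hfU' : ∀ k, f k ≤ U' := fun k => hsup ▸ le_iSup f k
      refine ⟨n + 1, Fin.cons W f, ?_, ?_, ?_, ?_, ?_⟩
      · intro k
        refine Fin.cases ?_ ?_ k
        · simpa using hWne
        · intro i; simpa using hbot i
      · intro k
        refine Fin.cases ?_ ?_ k
        · simpa using hWinv
        · intro i; simpa using hinvf i
      · intro k
        refine Fin.cases ?_ ?_ k
        · intro W' hW' hW'ne hW'inv
          rw [Fin.cons_zero] at hW' ⊢
          apply Submodule.eq_of_le_of_finrank_le hW'
          exact hmin W' ⟨le_trans hW' hWU, hW'ne, hW'inv⟩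
        · intro i
          simpa using hminf i
      · intro i j hij x hx y hy
        have horthW : ∀ i', ∀ x ∈ W, ∀ y ∈ f i', ⟪x, y⟫ = 0 := by
          intro i' x hx y hy
          have : y ∈ Wᗮ := (hfU' i' hy).1
          exact this x hx
        rcases Fin.eq_zero_or_eq_succ i with rfl | ⟨i', rfl⟩ <;>
          rcases Fin.eq_zero_or_eq_succ j with rfl | ⟨j', rfl⟩
        · exact absurd rfl hij
        · rw [Fin.cons_zero] at hx
          rw [Fin.cons_succ] at hy
          exact horthW j' x hx y hy
        · rw [Fin.cons_succ] at hx
          rw [Fin.cons_zero] at hy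
          rw [real_inner_comm]
          exact horthW i' y hy x hx
        · rw [Fin.cons_succ] at hx hy
          exact horth i' j' (by simpa [Fin.succ_inj] using hij) x hx y hy
      · rw [← hsupU]
        apply le_antisymm
        · apply iSup_le
          intro k
          refine Fin.cases ?_ ?_ k
          · rw [Fin.cons_zero]; exact le_sup_left
          · intro i
            rw [Fin.cons_succ]
            exact le_trans (le_trans (le_iSup f i) hsup.le) le_sup_right
        · apply sup_le
          · exact le_iSup (Fin.cons W f) 0
          · rw [← hsup]
            apply iSup_le
            intro i
            exact le_trans (by rw [Fin.cons_succ]) (le_iSup (Fin.cons W f) i.succ)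

lemma eq_snoc_snoc {m : ℕ} (Y : Fin (m + 2) → V) :
    Y = Fin.snoc (Fin.snoc (fun i => Y (Fin.castSucc (Fin.castSucc i)))
      (Y (Fin.castSucc (Fin.last m)))) (Y (Fin.last (m + 1))) := by
  funext k
  refine Fin.lastCases ?_ (fun j => ?_) k
  · simp
  · refine Fin.lastCases ?_ (fun i => ?_) j <;> simp

lemma snoc_comp_swap {m : ℕ} (ζ : Fin m → V) (Y Z : V) :
    (Fin.snoc (Fin.snoc ζ Y) Z : Fin (m + 2) → V) ∘
      Equiv.swap (Fin.castSucc (Fin.last m)) (Fin.last (m + 1)) =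
      (Fin.snoc (Fin.snoc ζ Z) Y : Fin (m + 2) → V) := by
  funext k
  refine Fin.lastCases ?_ (fun j => ?_) k
  · simp [Equiv.swap_apply_right]
  · refine Fin.lastCases ?_ (fun i => ?_) j
    · simp [Equiv.swap_apply_left]
    · have h1 : (Fin.castSucc (Fin.castSucc i)) ≠ Fin.castSucc (Fin.last m) := by
        simp only [ne_eq, Fin.castSucc_inj]
        exact Fin.ne_last_of_lt i.castSucc_lt_last
      have h2 : (Fin.castSucc (Fin.castSucc i)) ≠ Fin.last (m + 1) :=
        Fin.ne_last_of_lt (Fin.castSucc_lt_last _)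
      simp [Function.comp, Equiv.swap_apply_of_ne_of_ne h1 h2]

/-- A form satisfying the Plücker-type relations splits into irreducible pieces
supported on mutually orthogonal subspaces. -/
theorem stmt_19
    (m : ℕ)
    (T : AlternatingMap ℝ V ℝ (Fin (m + 2)))
    (hT : PluckerRel T) :
    ∃ (d : ℕ) (V0 : Submodule ℝ V) (Vs : Fin d → Submodule ℝ V)
      (Ts : Fin d → AlternatingMap ℝ V ℝ (Fin (m + 2))),
      -- orthogonal decomposition `V = V₀ ⊕ V₁ ⊕ ⋯ ⊕ V_d`
      (∀ k, ∀ x ∈ V0, ∀ y ∈ Vs k, ⟪x, y⟫ = 0) ∧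
      (∀ i j, i ≠ j → ∀ x ∈ Vs i, ∀ y ∈ Vs j, ⟪x, y⟫ = 0) ∧
      (V0 ⊔ ⨆ k, Vs k) = ⊤ ∧
      -- `T = Σₖ Tₖ`
      T = ∑ k, Ts k ∧
      ∀ k,
        -- `Tₖ` is supported on `Vₖ`
        (∀ (X : Fin (m + 2) → V) (i : Fin (m + 2)),
          (∀ v ∈ Vs k, ⟪X i, v⟫ = 0) → Ts k X = 0) ∧
        -- `Tₖ` satisfies the Plücker-type relations
        PluckerRel (Ts k) ∧
        -- `Tₖ` is irreducible: the Lie algebra generated by its contractions with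
        -- vectors of `Vₖ` acts irreducibly on `Vₖ`
        (∀ W : Submodule ℝ V, W ≤ Vs k →
          (∀ A ∈ LieSubalgebra.lieSpan ℝ (Module.End ℝ V)
            {F : Module.End ℝ V | ∃ ζ : Fin m → V, (∀ i, ζ i ∈ Vs k) ∧
              ∀ Y Z : V, ⟪F Y, Z⟫ = Ts k (Fin.snoc (Fin.snoc ζ Y) Z)},
            ∀ x ∈ W, A x ∈ W) →
          W = ⊥ ∨ W = Vs k) := by
    classical
  -- the set of contraction operators and the Lie algebra they span
  set G : Set (Module.End ℝ V) :=
    {F | ∃ ζ : Fin m → V, ∀ Y Z : V, ⟪F Y, Z⟫ = T (Fin.snoc (Fin.snoc ζ Y) Z)} with hGdef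
  have hTswap : ∀ (ζ : Fin m → V) (Y Z : V),
      T (Fin.snoc (Fin.snoc ζ Y) Z) = - T (Fin.snoc (Fin.snoc ζ Z) Y) := by
    intro ζ Y Z
    rw [← snoc_comp_swap ζ Z Y,
      T.map_swap _ (Fin.ne_last_of_lt ((Fin.last m).castSucc_lt_last))]
  have hGskew : ∀ F ∈ G, ∀ x y : V, ⟪F x, y⟫ = - ⟪x, F y⟫ := by
    rintro F ⟨ζ, hF⟩ x y
    rw [hF, hTswap, ← hF ]
    rw [real_inner_comm]
  set g := LieSubalgebra.lieSpan ℝ (Module.End ℝ V) G with hgdef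
  have hGsub : G ⊆ ↑g := LieSubalgebra.subset_lieSpan
  have hgskew : ∀ A ∈ (g : Set (Module.End ℝ V)), ∀ x y : V, ⟪A x, y⟫ = - ⟪x, A y⟫ := by
    intro A hA
    exact (LieSubalgebra.lieSpan_le.mpr hGskew : g ≤ skewAlg V) hA
  -- every element of `G` satisfies the Plücker annihilation property
  have hGann : ∀ F ∈ G, ∀ X : Fin (m + 2) → V,
      ∑ j, T (Function.update X j (F (X j))) = 0 := by
    rintro F ⟨ζ, hF⟩ X
    obtain ⟨F', hF'1, hF'2⟩ := hT ζ
    have : F = F' := by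
      apply LinearMap.ext
      intro x
      apply ext_inner_right ℝ
      intro y
      rw [hF x y, hF'1 x y]
    rw [this]
    exact hF'2 X
  -- decompose `V` into minimal `g`-invariant mutually orthogonal pieces
  obtain ⟨n, f, hbot, hinvf, hminf, horth, hsup⟩ :=
    decomp (V := V) (g : Set (Module.End ℝ V)) hgskew (Module.finrank ℝ V) ⊤
      (by rw [finrank_top]) (fun A _ x _ => Submodule.mem_top)
  -- orthogonal projections onto the pieces
  set p : Fin n → (V →ₗ[ℝ] V) := fun k =>
    (f k).subtype ∘ₗ (Submodule.orthogonalProjectionOnto (f k) : V →L[ℝ] f k).toLinearMap with hpdef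
  have hp_apply : ∀ k x, p k x = (Submodule.orthogonalProjectionOnto (f k) x : V) := fun k x => rfl
  have hpmem : ∀ k x, p k x ∈ f k := fun k x => (Submodule.orthogonalProjectionOnto (f k) x).2
  have hpid : ∀ k, ∀ x ∈ f k, p k x = x := fun k x hx =>
    Submodule.starProjection_eq_self_iff.mpr hx
  have hpzero : ∀ k, ∀ x ∈ (f k)ᗮ, p k x = 0 := by
    intro k x hx
    rw [hp_apply, Submodule.orthogonalProjectionOnto_apply_of_mem_orthogonal hx]
    rfl
  have horth' : ∀ (j k : Fin n), j ≠ k → ∀ x ∈ f j, x ∈ (f k)ᗮ := by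
    intro j k hjk x hx
    exact (Submodule.mem_orthogonal _ _).mpr fun u hu => horth k j (Ne.symm hjk) u hu x hx
  have hsumid : ∀ x : V, ∑ k, p k x = x := by
    intro x
    have hx : x ∈ (⨆ k, f k) := hsup ▸ Submodule.mem_top
    refine Submodule.iSup_induction f (motive := fun x => ∑ k, p k x = x) hx ?_ ?_ ?_
    · intro j x hx
      rw [Finset.sum_eq_single j (fun k _ hk => hpzero k x (horth' j k (Ne.symm hk) x hx))
        (fun h => absurd (Finset.mem_univ j) h)]
      exact hpid j x hx
    · simp
    · intro x y hx hy
      simp only [map_add, Finset.sum_add_distrib, hx, hy]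
  -- mixed vanishing, last two slots
  have L0 : ∀ (ζ : Fin m → V) (j k : Fin n), j ≠ k → ∀ x ∈ f j, ∀ y ∈ f k,
      T (Fin.snoc (Fin.snoc ζ x) y) = 0 := by
    intro ζ j k hjk x hx y hy
    obtain ⟨F, hF1, _⟩ := hT ζ
    rw [← hF1]
    exact horth j k hjk _ (hinvf j F (hGsub ⟨ζ, hF1⟩) x hx) y hy
  -- mixed vanishing, arbitrary slots
  have L1 : ∀ (Y : Fin (m + 2) → V) (a b : Fin (m + 2)) (j k : Fin n), a ≠ b → j ≠ k →
      Y a ∈ f j → Y b ∈ f k → T Y = 0 := by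
    intro Y a b j k hab hjk ha hb
    set i₁ : Fin (m + 2) := Fin.castSucc (Fin.last m) with hi₁
    set i₂ : Fin (m + 2) := Fin.last (m + 1) with hi₂
    have hi12 : i₁ ≠ i₂ := Fin.ne_last_of_lt ((Fin.last m).castSucc_lt_last)
    set s : Equiv.Perm (Fin (m + 2)) := Equiv.swap i₁ a with hs
    have hs2a : s i₂ ≠ a := by
      intro h
      have : s a = i₂ := by rw [← h, hs]; exact Equiv.swap_apply_self _ _ _
      rw [hs, Equiv.swap_apply_right] at this
      exact hi12 this
    set σ : Equiv.Perm (Fin (m + 2)) := s.trans (Equiv.swap (s i₂) b) with hσ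
    have h1 : σ i₁ = a := by
      rw [hσ, Equiv.trans_apply, hs, Equiv.swap_apply_left,
        Equiv.swap_apply_of_ne_of_ne (Ne.symm hs2a) hab]
    have h2 : σ i₂ = b := by
      rw [hσ, Equiv.trans_apply, Equiv.swap_apply_left]
    have hperm := T.map_perm Y σ
    have hz : T (Y ∘ σ) = 0 := by
      rw [eq_snoc_snoc (Y ∘ σ)]
      have e1 : (Y ∘ σ) (Fin.castSucc (Fin.last m)) = Y a := by
        rw [Function.comp_apply, ← hi₁, h1]
      have e2 : (Y ∘ σ) (Fin.last (m + 1)) = Y b := by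
        rw [Function.comp_apply, ← hi₂, h2]
      rw [e1, e2]
      exact L0 _ j k hjk _ ha _ hb
    rw [hz] at hperm
    rcases Int.units_eq_one_or (Equiv.Perm.sign σ) with h | h <;> rw [h] at hperm
    · simpa using hperm.symm
    · simpa [neg_eq_zero] using hperm.symm
  -- vanishing with one slot orthogonal to a piece and another in the piece
  have L2 : ∀ (Y : Fin (m + 2) → V) (a b : Fin (m + 2)) (k : Fin n), a ≠ b →
      Y a ∈ (f k)ᗮ → Y b ∈ f k → T Y = 0 := by
    intro Y a b k hab ha hb
    have hY : T Y = T (Function.update Y a (∑ j, p j (Y a))) := by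
      rw [hsumid, Function.update_eq_self]
    rw [hY, ← T.coe_multilinearMap,
      T.toMultilinearMap.map_update_sum Finset.univ a (fun j => p j (Y a)) Y]
    apply Finset.sum_eq_zero
    intro j _
    by_cases hjk : j = k
    · subst hjk
      have : p j (Y a) = 0 := hpzero j _ ha
      rw [AlternatingMap.coe_multilinearMap]
      exact T.map_coord_zero a (by rw [Function.update_self, this])
    · rw [AlternatingMap.coe_multilinearMap]
      refine L1 _ a b j k hab hjk ?_ ?_
      · rw [Function.update_self]; exact hpmem j _
      · rw [Function.update_of_ne (Ne.symm hab)]; exact hb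
  -- projecting the contraction vectors does not change values on a piece
  have L3 : ∀ (ζ : Fin m → V) (k : Fin n), ∀ x ∈ f k, ∀ z ∈ f k,
      T (Fin.snoc (Fin.snoc ζ x) z) =
      T (Fin.snoc (Fin.snoc (fun i => p k (ζ i)) x) z) := by
    intro ζ k x hx z hz
    set A : Fin (m + 2) → V := Fin.snoc (Fin.snoc (fun i => ζ i - p k (ζ i)) (0 : V)) (0 : V)
      with hA
    set B : Fin (m + 2) → V := Fin.snoc (Fin.snoc (fun i => p k (ζ i)) x) z with hB
    have hAB : A + B = Fin.snoc (Fin.snoc ζ x) z := by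
      funext i
      refine Fin.lastCases ?_ (fun j => ?_) i
      · simp [hA, hB]
      · refine Fin.lastCases ?_ (fun i' => ?_) j <;> simp [hA, hB]
    rw [← hAB, ← T.coe_multilinearMap, T.toMultilinearMap.map_add_univ A B]
    rw [Finset.sum_eq_single_of_mem ∅ (Finset.mem_univ _)]
    · simp
    · intro t _ ht
      obtain ⟨a, ha⟩ := Finset.nonempty_iff_ne_empty.mpr ht
      have hAzero : ∀ c : Fin (m + 2), A c ≠ 0 →
          ∃ i : Fin m, c = Fin.castSucc (Fin.castSucc i) := by
        intro c
        refine Fin.lastCases ?_ (fun j => ?_) c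
        · intro h; exact absurd (by simp [hA]) h
        · refine Fin.lastCases ?_ (fun i' => ?_) j
          · intro h; exact absurd (by simp [hA]) h
          · intro _; exact ⟨i', rfl⟩
      by_cases hAa : A a = 0
      · exact T.toMultilinearMap.map_coord_zero a
          (by rw [Finset.piecewise_eq_of_mem _ _ _ ha]; exact hAa)
      · obtain ⟨i, rfl⟩ := hAzero a hAa
        have haval : A (Fin.castSucc (Fin.castSucc i)) = ζ i - p k (ζ i) := by
          simp [hA]
        have horthmem : A (Fin.castSucc (Fin.castSucc i)) ∈ (f k)ᗮ := by
          rw [haval, hp_apply]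
          exact Submodule.sub_starProjection_mem_orthogonal (K := f k) (ζ i)
        set i₂ : Fin (m + 2) := Fin.last (m + 1) with hi₂
        have hai₂ : Fin.castSucc (Fin.castSucc i) ≠ i₂ :=
          Fin.ne_last_of_lt (Fin.castSucc_lt_last _)
        by_cases hi₂t : i₂ ∈ t
        · exact T.toMultilinearMap.map_coord_zero i₂
            (by rw [Finset.piecewise_eq_of_mem _ _ _ hi₂t]; simp [hA, hi₂])
        · rw [AlternatingMap.coe_multilinearMap]
          refine L2 _ (Fin.castSucc (Fin.castSucc i)) i₂ k hai₂ ?_ ?_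
          · rw [Finset.piecewise_eq_of_mem _ _ _ ha]
            exact horthmem
          · rw [Finset.piecewise_eq_of_notMem _ _ _ hi₂t]
            simpa [hB, hi₂] using hz
  -- the pieces of `T`
  set Ts : Fin n → AlternatingMap ℝ V ℝ (Fin (m + 2)) :=
    fun k => T.compLinearMap (p k) with hTs
  have hTs_apply : ∀ k X, Ts k X = T fun i => p k (X i) := fun k X => rfl
  refine ⟨n, ⊥, f, Ts, ?_, ?_, ?_, ?_, ?_⟩
  · intro k x hx y _
    rw [Submodule.mem_bot] at hx
    rw [hx, inner_zero_left]
  · exact horth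
  · rw [bot_sup_eq]; exact hsup
  · -- T = ∑ k, Ts k
    apply AlternatingMap.ext
    intro X
    have hR : ∀ (s : Finset (Fin n)), (∑ k ∈ s, Ts k) X = ∑ k ∈ s, Ts k X := by
      intro s
      induction s using Finset.induction with
      | empty => simp
      | insert _ _ hnot ih =>
        rw [Finset.sum_insert hnot, Finset.sum_insert hnot, AlternatingMap.add_apply, ih]
    have hXsum : T X = T fun i => ∑ k, p k (X i) := by
      congr 1
      funext i
      rw [hsumid]
    have hzero : ∀ r : Fin (m + 2) → Fin n, (∀ k, r ≠ Function.const (Fin (m + 2)) k) →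
        T (fun i => p (r i) (X i)) = 0 := by
      intro r hr
      obtain ⟨i, hi⟩ := Function.ne_iff.mp (hr (r 0))
      simp only [Function.const_apply] at hi
      have hi0 : i ≠ 0 := by intro h; rw [h] at hi; exact hi rfl
      exact L1 _ i 0 (r i) (r 0) hi0 hi (hpmem _ _) (hpmem _ _)
    rw [hR Finset.univ, hXsum, ← T.coe_multilinearMap,
      T.toMultilinearMap.map_sum (α := fun _ => Fin n) (g := fun i k => p k (X i))]
    simp only [AlternatingMap.coe_multilinearMap]
    rw [← Finset.sum_subset
      (Finset.subset_univ ((Finset.univ : Finset (Fin n)).image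
        (fun k => Function.const (Fin (m + 2)) k)))
      (fun r _ hr => hzero r
        (fun k hk => hr (Finset.mem_image.mpr ⟨k, Finset.mem_univ k, hk.symm⟩)))]
    rw [Finset.sum_image (fun x _ y _ h => congrFun h 0)]
    exact Finset.sum_congr rfl fun k _ => rfl
  · -- properties of each piece
    intro k
    have hcomp : ∀ (ζ : Fin m → V) (Y Z : V),
        (fun i => p k ((Fin.snoc (Fin.snoc ζ Y) Z : Fin (m + 2) → V) i)) =
        Fin.snoc (Fin.snoc (fun i => p k (ζ i)) (p k Y)) (p k Z) := by
      intro ζ Y Z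
      funext i
      refine Fin.lastCases ?_ (fun j => ?_) i
      · simp
      · refine Fin.lastCases ?_ (fun i' => ?_) j <;> simp
    refine ⟨?_, ?_, ?_⟩
    · -- support
      intro X i hXi
      have h0 : p k (X i) = 0 := hpzero k _ ((Submodule.mem_orthogonal' _ _).mpr hXi)
      rw [hTs_apply]
      exact T.map_coord_zero i h0
    · -- Plücker relations for the piece
      intro ζ
      obtain ⟨F', h1, h2⟩ := hT (fun i => p k (ζ i))
      have hF'G : F' ∈ G := ⟨_, h1⟩
      have hpp : (fun i => p k (p k (ζ i))) = fun i => p k (ζ i) :=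
        funext fun i => hpid k _ (hpmem k _)
      refine ⟨p k ∘ₗ F' ∘ₗ p k, ?_, ?_⟩
      · intro Y Z
        have e1 : ⟪(p k ∘ₗ F' ∘ₗ p k) Y, Z⟫ = ⟪F' (p k Y), p k Z⟫ := by
          show ⟪p k (F' (p k Y)), Z⟫ = _
          rw [hp_apply, ← Submodule.starProjection_apply, Submodule.inner_starProjection_left_eq_right,
        Submodule.starProjection_apply, ← hp_apply]
        rw [e1, h1, hTs_apply, hcomp ζ Y Z]
      · intro X
        have hup : ∀ (j : Fin (m + 2)) (v : V),
            (fun i => p k (Function.update X j v i)) =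
            Function.update (fun i => p k (X i)) j (p k v) := by
          intro j v
          funext i
          rcases eq_or_ne i j with rfl | h
          · simp
          · simp [Function.update_of_ne h]
        have hterm : ∀ j : Fin (m + 2),
            Ts k (Function.update X j ((p k ∘ₗ F' ∘ₗ p k) (X j))) =
            T (Function.update (fun i => p k (X i)) j (F' (p k (X j)))) := by
          intro j
          have hm : F' (p k (X j)) ∈ f k := hinvf k F' (hGsub hF'G) _ (hpmem k (X j))
          have hv : p k ((p k ∘ₗ F' ∘ₗ p k) (X j)) = F' (p k (X j)) := by
            show p k (p k (F' (p k (X j)))) = _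
            rw [hpid k _ (hpmem k _), hpid k _ hm]
          rw [hTs_apply, hup j _, hv]
        rw [Finset.sum_congr rfl fun j _ => hterm j]
        exact h2 (fun i => p k (X i))
    · -- irreducibility
      intro W hWle hWinv
      by_cases hWbot : W = ⊥
      · exact Or.inl hWbot
      right
      have hGW : ∀ F ∈ G, ∀ x ∈ W, F x ∈ W := by
        rintro F ⟨ζ, hF⟩ x hx
        set ζ' : Fin m → V := fun i => p k (ζ i) with hζ'
        obtain ⟨F', h1, _⟩ := hT ζ'
        have hF'G : F' ∈ G := ⟨_, h1⟩
        set A : Module.End ℝ V := p k ∘ₗ F' ∘ₗ p k with hAdef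
        have hpp : (fun i => p k (ζ' i)) = ζ' :=
          funext fun i => hpid k _ (hpmem k _)
        have hA_apply : ∀ Y Z : V, ⟪A Y, Z⟫ = Ts k (Fin.snoc (Fin.snoc ζ' Y) Z) := by
          intro Y Z
          have e1 : ⟪A Y, Z⟫ = ⟪F' (p k Y), p k Z⟫ := by
            show ⟪p k (F' (p k Y)), Z⟫ = _
            rw [hp_apply, ← Submodule.starProjection_apply, Submodule.inner_starProjection_left_eq_right,
        Submodule.starProjection_apply, ← hp_apply]
          rw [e1, h1, hTs_apply, hcomp ζ' Y Z, hpp]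
        have hAx : A x ∈ W :=
          hWinv A (LieSubalgebra.subset_lieSpan ⟨ζ', fun i => hpmem k (ζ i), hA_apply⟩) x hx
        have hxk : x ∈ f k := hWle hx
        have hFx : F x ∈ f k := hinvf k F (hGsub ⟨ζ, hF⟩) x hxk
        have hAxk : A x ∈ f k := hpmem k _
        have heq : F x = A x := by
          have hsub : F x - A x ∈ f k := (f k).sub_mem hFx hAxk
          have hz : ∀ z ∈ f k, ⟪F x - A x, z⟫ = 0 := by
            intro z hzk
            rw [inner_sub_left]
            have e2 : ⟪A x, z⟫ = T (Fin.snoc (Fin.snoc ζ' x) z) := by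
              show ⟪p k (F' (p k x)), z⟫ = _
              rw [hpid k x hxk, hp_apply, ← Submodule.starProjection_apply, Submodule.inner_starProjection_left_eq_right,
        Submodule.starProjection_apply,
                ← hp_apply, hpid k z hzk]
              exact h1 x z
            rw [hF x z, e2, L3 ζ k x hxk z hzk]
            exact sub_self _
          have h0 : ⟪F x - A x, F x - A x⟫ = 0 := hz _ hsub
          exact sub_eq_zero.mp (inner_self_eq_zero.mp h0)
        rw [heq]; exact hAx
      have hgW : g ≤ stabAlg W := LieSubalgebra.lieSpan_le.mpr hGW
      exact hminf k W hWle hWbot fun A hA => hgW hA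
end
end
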